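/- Let p ≥ 2 and ψ ∈ Ψ. If u > 0 and 1 ≤ r ≤ u+1, then there exist (at one point) timelike r-dimensional subspaces π_1, π_2 of (N, g_N) with rank J_N(π_1) ≠ rank J_N(π_2); hence (N, g_N) is not Jordan Osserman of type (r,0). Similarly, if v > 0 and 1 ≤ s ≤ v+1, there exist spacelike s-dimensional subspaces π_1, π_2 with rank J_N(π_1) ≠ rank J_N(π_2), so (N, g_N) is not Jordan Osserman of type (0,s). -/

import Mathlib

open scoped BigOperators

/-- The partial derivative `∂ₖ f` at `x`. -/
noncomputable def pd {p : ℕ} (f : (Fin p → ℝ) → ℝ) (k : Fin p) (x : Fin p → ℝ) : ℝ :=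
  fderiv ℝ f x (Pi.single k 1)

/-- The second partial derivative `∂ₖ ∂ₗ f` at `x`. -/
noncomputable def pd2 {p : ℕ} (f : (Fin p → ℝ) → ℝ) (k l : Fin p) (x : Fin p → ℝ) : ℝ :=
  pd (pd f l) k x

/-- The curvature components
`R_ψ(i,j,k,l) := -(1/2)(ψ_{il/jk} + ψ_{jk/il} - ψ_{ik/jl} - ψ_{jl/ik})`,
where `ψ_{ab/cd} := ∂_c ∂_d ψ_{ab}`. -/
noncomputable def curv {p : ℕ} (ψ : (Fin p → ℝ) → Fin p → Fin p → ℝ)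
    (i j k l : Fin p) (x : Fin p → ℝ) : ℝ :=
  -(1/2) * (pd2 (fun y => ψ y i l) j k x + pd2 (fun y => ψ y j k) i l x
    - pd2 (fun y => ψ y i k) j l x - pd2 (fun y => ψ y j l) i k x)

/-- The Jacobi bilinear form `𝒥_ψ(x;X)(Y,Z) := Σ R_ψ(i,j,k,l)(x) Yᵢ Xⱼ Xₖ Zₗ`. -/
noncomputable def jacobiForm {p : ℕ} (ψ : (Fin p → ℝ) → Fin p → Fin p → ℝ)
    (x X Y Z : Fin p → ℝ) : ℝ :=
  ∑ i, ∑ j, ∑ k, ∑ l, curv ψ i j k l x * Y i * X j * X k * Z l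

/-- `ψ` is a smooth symmetric 2-tensor field on `ℝ^p`. -/
def IsSmoothSym {p : ℕ} (ψ : (Fin p → ℝ) → Fin p → Fin p → ℝ) : Prop :=
  (∀ i j, ContDiff ℝ (⊤ : ℕ∞) fun x => ψ x i j) ∧ ∀ x i j, ψ x i j = ψ x j i

/-- Membership in the class `Ψ`: `ψ` is a smooth symmetric 2-tensor field such that for every
`x` and every `X ≠ 0` the Jacobi form `𝒥_ψ(x;X)` is positive semidefinite with null space
exactly the line `ℝ·X` (i.e. positive semidefinite of rank `p-1`). -/
def MemPsi {p : ℕ} (ψ : (Fin p → ℝ) → Fin p → Fin p → ℝ) : Prop :=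
  IsSmoothSym ψ ∧ ∀ (x X : Fin p → ℝ), X ≠ 0 →
    (∀ Y, 0 ≤ jacobiForm ψ x X Y Y) ∧
    ∀ Y, (∀ Z, jacobiForm ψ x X Y Z = 0) ↔ ∃ c : ℝ, Y = c • X

/-- The model space `ℝ^{2p} = ℝ^p × ℝ^p`; `Sum.inl` indexes the `x`-coordinates and
`Sum.inr` the `y`-coordinates. -/
abbrev VV (p : ℕ) := Fin p ⊕ Fin p → ℝ

/-- The neutral signature `(p,p)` metric `g_ψ` at the point with `x`-coordinate `x`:
`g(∂ᵢˣ,∂ⱼʸ) = δᵢⱼ`, `g(∂ᵢʸ,∂ⱼʸ) = 0`, `g(∂ᵢˣ,∂ⱼˣ) = ψᵢⱼ(x)`. -/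
noncomputable def gpsi {p : ℕ} (ψ : (Fin p → ℝ) → Fin p → Fin p → ℝ)
    (x : Fin p → ℝ) (Z W : VV p) : ℝ :=
  (∑ i, Z (Sum.inl i) * W (Sum.inr i)) + (∑ i, Z (Sum.inr i) * W (Sum.inl i))
    + ∑ i, ∑ j, ψ x i j * Z (Sum.inl i) * W (Sum.inl j)

/-- The Jacobi operator `J(x;Z)` of `(ℝ^{2p}, g_ψ)` as a matrix: its image lies in
`𝒴 = span{∂ᵢʸ}` and its `y`-components are
`(J(x;Z)W)_l = Σ_{i,j,k} R_ψ(i,j,k,l)(x) (ρW)ᵢ (ρZ)ⱼ (ρZ)ₖ`. -/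
noncomputable def jacobiMat {p : ℕ} (ψ : (Fin p → ℝ) → Fin p → Fin p → ℝ)
    (x : Fin p → ℝ) (Z : VV p) : Matrix (Fin p ⊕ Fin p) (Fin p ⊕ Fin p) ℝ :=
  Matrix.of fun a b =>
    match a, b with
    | Sum.inr l, Sum.inl i => ∑ j, ∑ k, curv ψ i j k l x * Z (Sum.inl j) * Z (Sum.inl k)
    | _, _ => 0

/-- `π` is a nondegenerate subspace of signature `(r,s)` for the symmetric bilinear form `g`:
`g` restricted to `π` is nondegenerate, the maximal dimension of a negative definite subspace
of `π` is `r`, and the maximal dimension of a positive definite subspace of `π` is `s`. -/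
def HasSignature {V : Type*} [AddCommGroup V] [Module ℝ V] (g : V → V → ℝ)
    (π : Submodule ℝ V) (r s : ℕ) : Prop :=
  (∀ z ∈ π, (∀ w ∈ π, g z w = 0) → z = 0) ∧
  (∃ W : Submodule ℝ V, W ≤ π ∧ Module.finrank ℝ W = r ∧ ∀ z ∈ W, z ≠ 0 → g z z < 0) ∧
  (∀ W : Submodule ℝ V, W ≤ π → (∀ z ∈ W, z ≠ 0 → g z z < 0) → Module.finrank ℝ W ≤ r) ∧
  (∃ W : Submodule ℝ V, W ≤ π ∧ Module.finrank ℝ W = s ∧ ∀ z ∈ W, z ≠ 0 → 0 < g z z) ∧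
  (∀ W : Submodule ℝ V, W ≤ π → (∀ z ∈ W, z ≠ 0 → 0 < g z z) → Module.finrank ℝ W ≤ s)

/-- `e` is a `g`-orthonormal basis of `π` with signs `ε i = g(e i, e i) = ±1`. -/
def IsOrthoBasis {V : Type*} [AddCommGroup V] [Module ℝ V] (g : V → V → ℝ)
    (π : Submodule ℝ V) {n : ℕ} (e : Fin n → V) (ε : Fin n → ℝ) : Prop :=
  Submodule.span ℝ (Set.range e) = π ∧ (∀ i, ε i = 1 ∨ ε i = -1) ∧
    ∀ i j, g (e i) (e j) = if i = j then ε i else 0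

/-- The higher order Jacobi operator `J(π) := Σᵢ εᵢ J(x; eᵢ)` determined by a
`g_ψ`-orthonormal basis `e` with signs `ε` of a nondegenerate subspace. -/
noncomputable def hoJ {p : ℕ} (ψ : (Fin p → ℝ) → Fin p → Fin p → ℝ) (x : Fin p → ℝ)
    {n : ℕ} (e : Fin n → VV p) (ε : Fin n → ℝ) :
    Matrix (Fin p ⊕ Fin p) (Fin p ⊕ Fin p) ℝ :=
  ∑ i, ε i • jacobiMat ψ x (e i)

/-- Two square matrices are similar (conjugate), i.e. they have the same Jordan normal form. -/
def MatSimilar {ι : Type*} [Fintype ι] [DecidableEq ι] (A B : Matrix ι ι ℝ) : Prop :=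
  ∃ P : Matrix ι ι ℝ, IsUnit P.det ∧ A = P * B * P⁻¹

/-- The model space of the product `N = ℝ^{2p} × ℝ^{(u,v)}`. -/
abbrev VN (p u v : ℕ) := (Fin p ⊕ Fin p) ⊕ Fin (u + v) → ℝ

/-- The product metric `g_N = g_ψ ⊕ ⟨·,·⟩_{(u,v)}` of signature `(p+u, p+v)`,
where the flat factor has `u` negative and `v` positive directions. -/
noncomputable def gN {p : ℕ} (u v : ℕ) (ψ : (Fin p → ℝ) → Fin p → Fin p → ℝ)
    (x : Fin p → ℝ) (Z W : VN p u v) : ℝ :=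
  gpsi ψ x (fun a => Z (Sum.inl a)) (fun a => W (Sum.inl a))
    + ∑ i : Fin (u + v), (if (i : ℕ) < u then (-1 : ℝ) else 1) * Z (Sum.inr i) * W (Sum.inr i)

/-- The Jacobi operator of the product metric `g_N`: `J_N(x;Z)W = (J(x;Z_M)W_M, 0)`. -/
noncomputable def jacobiMatN {p : ℕ} (u v : ℕ) (ψ : (Fin p → ℝ) → Fin p → Fin p → ℝ)
    (x : Fin p → ℝ) (Z : VN p u v) :
    Matrix ((Fin p ⊕ Fin p) ⊕ Fin (u + v)) ((Fin p ⊕ Fin p) ⊕ Fin (u + v)) ℝ :=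
  Matrix.of fun a b =>
    match a, b with
    | Sum.inl a', Sum.inl b' => jacobiMat ψ x (fun c => Z (Sum.inl c)) a' b'
    | _, _ => 0

/-- The higher order Jacobi operator `J_N(π) := Σᵢ εᵢ J_N(x; eᵢ)` of `(N, g_N)`. -/
noncomputable def hoJN {p : ℕ} (u v : ℕ) (ψ : (Fin p → ℝ) → Fin p → Fin p → ℝ)
    (x : Fin p → ℝ) {n : ℕ} (e : Fin n → VN p u v) (ε : Fin n → ℝ) :
    Matrix ((Fin p ⊕ Fin p) ⊕ Fin (u + v)) ((Fin p ⊕ Fin p) ⊕ Fin (u + v)) ℝ :=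
  ∑ i, ε i • jacobiMatN u v ψ x (e i)

section Aux

open Module Submodule Matrix

/-! ### Schwarz symmetry -/

lemma pd2_comm {p : ℕ} (f : (Fin p → ℝ) → ℝ) (hf : ContDiff ℝ (⊤ : ℕ∞) f) (k l : Fin p)
    (x : Fin p → ℝ) : pd2 f k l x = pd2 f l k x := by
  have hsym : IsSymmSndFDerivAt ℝ f x :=
    (hf.contDiffAt).isSymmSndFDerivAt (by rw [minSmoothness_of_isRCLikeNormedField]; exact WithTop.coe_le_coe.mpr (le_top : (2 : ℕ∞) ≤ ⊤))
  have hdf : DifferentiableAt ℝ (fderiv ℝ f) x := by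
    have : ContDiff ℝ (1 : ℕ∞) (fderiv ℝ f) := hf.fderiv_right (by exact_mod_cast le_top)
    exact this.differentiable (by simp) x
  have key : ∀ a b : Fin p,
      pd2 f a b x = fderiv ℝ (fderiv ℝ f) x (Pi.single a 1) (Pi.single b 1) := by
    intro a b
    have h2 := fderiv_clm_apply (c := fderiv ℝ f)
      (u := fun _ : (Fin p → ℝ) => (Pi.single b 1 : Fin p → ℝ)) hdf (differentiableAt_const _)
    have h3 : pd2 f a b x
        = fderiv ℝ (fun y => (fderiv ℝ f y)
            ((fun _ : (Fin p → ℝ) => (Pi.single b 1 : Fin p → ℝ)) y)) x (Pi.single a 1) := rfl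
    rw [h3, h2]
    simp
  rw [key, key, hsym (Pi.single k 1) (Pi.single l 1)]

lemma curv_symm {p : ℕ} {ψ : (Fin p → ℝ) → Fin p → Fin p → ℝ} (hψ : IsSmoothSym ψ)
    (a b c d : Fin p) (x : Fin p → ℝ) : curv ψ d c b a x = curv ψ a b c d x := by
  have hfun : ∀ a b : Fin p, (fun y => ψ y a b) = (fun y => ψ y b a) :=
    fun a b => funext fun y => hψ.2 y a b
  rw [curv, curv,
    show (fun y => ψ y d a) = fun y => ψ y a d from hfun d a,
    show (fun y => ψ y c b) = fun y => ψ y b c from hfun c b,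
    show (fun y => ψ y d b) = fun y => ψ y b d from hfun d b,
    show (fun y => ψ y c a) = fun y => ψ y a c from hfun c a,
    pd2_comm _ (hψ.1 a d) c b, pd2_comm _ (hψ.1 b c) d a,
    pd2_comm _ (hψ.1 b d) c a, pd2_comm _ (hψ.1 a c) d b]
  ring

/-! ### The core `p × p` matrix -/

/-- The matrix of the Jacobi form: `(Bm ψ x X) l i = Σ_{j,k} curv i j k l x X_j X_k`. -/
noncomputable def Bm {p : ℕ} (ψ : (Fin p → ℝ) → Fin p → Fin p → ℝ) (x X : Fin p → ℝ) :
    Matrix (Fin p) (Fin p) ℝ :=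
  Matrix.of fun l i => ∑ j, ∑ k, curv ψ i j k l x * X j * X k

lemma dot_Bm {p : ℕ} (ψ : (Fin p → ℝ) → Fin p → Fin p → ℝ) (x X Y Z : Fin p → ℝ) :
    Z ⬝ᵥ (Bm ψ x X) *ᵥ Y = jacobiForm ψ x X Y Z := by
  have h1 : jacobiForm ψ x X Y Z
      = ∑ l, ∑ i, ∑ j, ∑ k, curv ψ i j k l x * Y i * X j * X k * Z l := by
    rw [jacobiForm]
    calc (∑ i, ∑ j, ∑ k, ∑ l, curv ψ i j k l x * Y i * X j * X k * Z l)
        = ∑ i, ∑ j, ∑ l, ∑ k, curv ψ i j k l x * Y i * X j * X k * Z l :=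
          Finset.sum_congr rfl fun i _ => Finset.sum_congr rfl fun j _ => Finset.sum_comm
      _ = ∑ i, ∑ l, ∑ j, ∑ k, curv ψ i j k l x * Y i * X j * X k * Z l :=
          Finset.sum_congr rfl fun i _ => Finset.sum_comm
      _ = ∑ l, ∑ i, ∑ j, ∑ k, curv ψ i j k l x * Y i * X j * X k * Z l :=
          Finset.sum_comm
  rw [h1]
  simp only [dotProduct, Matrix.mulVec, Bm, Matrix.of_apply, Finset.sum_mul,
    Finset.mul_sum]
  exact Finset.sum_congr rfl fun l _ => Finset.sum_congr rfl fun i _ =>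
    Finset.sum_congr rfl fun j _ => Finset.sum_congr rfl fun k _ => by ring

lemma Bm_zero {p : ℕ} (ψ : (Fin p → ℝ) → Fin p → Fin p → ℝ) (x : Fin p → ℝ) :
    Bm ψ x 0 = 0 := by
  ext l i
  simp [Bm]

lemma Bm_posSemidef {p : ℕ} {ψ : (Fin p → ℝ) → Fin p → Fin p → ℝ} (hψ : MemPsi ψ)
    (x : Fin p → ℝ) {X : Fin p → ℝ} (hX : X ≠ 0) : (Bm ψ x X).PosSemidef := by
  refine Matrix.PosSemidef.of_dotProduct_mulVec_nonneg ?_ ?_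
  · show (Bm ψ x X).conjTranspose = Bm ψ x X
    ext l i
    show star (Bm ψ x X i l) = Bm ψ x X l i
    rw [star_trivial]
    show (∑ j, ∑ k, curv ψ l j k i x * X j * X k) = ∑ j, ∑ k, curv ψ i j k l x * X j * X k
    have h1 : (∑ j, ∑ k, curv ψ l j k i x * X j * X k)
        = ∑ j, ∑ k, curv ψ i k j l x * X j * X k := by
      refine Finset.sum_congr rfl fun j _ => Finset.sum_congr rfl fun k _ => ?_
      rw [curv_symm hψ.1 i k j l x]
    rw [h1, Finset.sum_comm]
    exact Finset.sum_congr rfl fun j _ => Finset.sum_congr rfl fun k _ => by ring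
  · intro y
    rw [star_trivial, dot_Bm]
    exact ((hψ.2 x X hX).1 y)

lemma Bm_mulVec_eq_zero_iff {p : ℕ} {ψ : (Fin p → ℝ) → Fin p → Fin p → ℝ} (hψ : MemPsi ψ)
    (x : Fin p → ℝ) {X : Fin p → ℝ} (hX : X ≠ 0) (Y : Fin p → ℝ) :
    (Bm ψ x X) *ᵥ Y = 0 ↔ ∃ c : ℝ, Y = c • X := by
  rw [← (hψ.2 x X hX).2 Y]
  constructor
  · intro h Z
    rw [← dot_Bm, h, dotProduct_zero]
  · intro h
    have h2 : ((Bm ψ x X) *ᵥ Y) ⬝ᵥ ((Bm ψ x X) *ᵥ Y) = 0 := by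
      rw [dot_Bm]; exact h _
    exact dotProduct_self_eq_zero.mp h2

/-! ### Rank computations -/

lemma rank_add_ker {p : ℕ} (A : Matrix (Fin p) (Fin p) ℝ) :
    A.rank + Module.finrank ℝ (LinearMap.ker A.mulVecLin) = p := by
  have h := LinearMap.finrank_range_add_finrank_ker A.mulVecLin
  rw [Module.finrank_fin_fun] at h
  exact h

lemma rank_Bm {p : ℕ} {ψ : (Fin p → ℝ) → Fin p → Fin p → ℝ} (hψ : MemPsi ψ)
    (x : Fin p → ℝ) {X : Fin p → ℝ} (hX : X ≠ 0) (s : ℝ) (hs : s ≠ 0) :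
    (s • Bm ψ x X).rank = p - 1 ∧ 1 ≤ p := by
  have hker : LinearMap.ker (s • Bm ψ x X).mulVecLin = Submodule.span ℝ {X} := by
    ext y
    rw [LinearMap.mem_ker, Matrix.mulVecLin_apply, Matrix.smul_mulVec]
    rw [show (s • (Bm ψ x X) *ᵥ y = 0) ↔ ((Bm ψ x X) *ᵥ y = 0) by simp [smul_eq_zero, hs]]
    rw [Bm_mulVec_eq_zero_iff hψ x hX, Submodule.mem_span_singleton]
    constructor
    · rintro ⟨c, rfl⟩; exact ⟨c, rfl⟩
    · rintro ⟨c, rfl⟩; exact ⟨c, rfl⟩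
  have h := rank_add_ker (s • Bm ψ x X)
  rw [hker, finrank_span_singleton hX] at h
  omega

lemma rank_Bm_add {p : ℕ} {ψ : (Fin p → ℝ) → Fin p → Fin p → ℝ} (hψ : MemPsi ψ)
    (x : Fin p → ℝ) {X X' : Fin p → ℝ} (hX : X ≠ 0) (hX' : X' ≠ 0)
    (hind : ∀ (y : Fin p → ℝ) (c c' : ℝ), y = c • X → y = c' • X' → y = 0)
    (s : ℝ) (hs : s ≠ 0) :
    (s • (Bm ψ x X + Bm ψ x X')).rank = p := by
  have hker : LinearMap.ker (s • (Bm ψ x X + Bm ψ x X')).mulVecLin = ⊥ := by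
    rw [Submodule.eq_bot_iff]
    intro y hy
    rw [LinearMap.mem_ker, Matrix.mulVecLin_apply, Matrix.smul_mulVec] at hy
    rw [show (s • (Bm ψ x X + Bm ψ x X') *ᵥ y = 0) ↔ ((Bm ψ x X + Bm ψ x X') *ᵥ y = 0)
      by simp [smul_eq_zero, hs]] at hy
    rw [Matrix.add_mulVec] at hy
    have hB := Bm_posSemidef hψ x hX
    have hB' := Bm_posSemidef hψ x hX'
    have h1 : 0 ≤ y ⬝ᵥ (Bm ψ x X) *ᵥ y := by have := hB.dotProduct_mulVec_nonneg y; rwa [star_trivial] at this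
    have h2 : 0 ≤ y ⬝ᵥ (Bm ψ x X') *ᵥ y := by have := hB'.dotProduct_mulVec_nonneg y; rwa [star_trivial] at this
    have h3 : y ⬝ᵥ (Bm ψ x X) *ᵥ y + y ⬝ᵥ (Bm ψ x X') *ᵥ y = 0 := by
      rw [← dotProduct_add, hy, dotProduct_zero]
    have e1 : y ⬝ᵥ (Bm ψ x X) *ᵥ y = 0 := by linarith
    have e2 : y ⬝ᵥ (Bm ψ x X') *ᵥ y = 0 := by linarith
    have k1 : (Bm ψ x X) *ᵥ y = 0 := by
      have := (hB.dotProduct_mulVec_zero_iff y).mp (by rwa [star_trivial]); exact this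
    have k2 : (Bm ψ x X') *ᵥ y = 0 := by
      have := (hB'.dotProduct_mulVec_zero_iff y).mp (by rwa [star_trivial]); exact this
    obtain ⟨c, hc⟩ := (Bm_mulVec_eq_zero_iff hψ x hX y).mp k1
    obtain ⟨c', hc'⟩ := (Bm_mulVec_eq_zero_iff hψ x hX' y).mp k2
    exact hind y c c' hc hc'
  have h := rank_add_ker (s • (Bm ψ x X + Bm ψ x X'))
  rw [hker, finrank_bot] at h
  omega

end Aux

section Aux2

open Module Submodule Matrix

/-- Linear embedding of `ℝ^p` into `VN p u v` in the `y`-slot. -/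
def embL (p u v : ℕ) : (Fin p → ℝ) →ₗ[ℝ] VN p u v where
  toFun w := Sum.elim (Sum.elim 0 w) 0
  map_add' a b := by
    funext c
    rcases c with (c | c) | c <;> simp
  map_smul' t a := by
    funext c
    rcases c with (c | c) | c <;> simp

lemma embL_injective (p u v : ℕ) : Function.Injective (embL p u v) := by
  intro a b h
  funext l
  have := congrFun h (Sum.inl (Sum.inr l))
  simpa [embL] using this

/-- Embedding of a `p × p` matrix into the `(y-row, x-column)` block. -/
def embM {p : ℕ} (u v : ℕ) (C : Matrix (Fin p) (Fin p) ℝ) :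
    Matrix ((Fin p ⊕ Fin p) ⊕ Fin (u + v)) ((Fin p ⊕ Fin p) ⊕ Fin (u + v)) ℝ :=
  Matrix.of fun a b =>
    match a, b with
    | Sum.inl (Sum.inr l), Sum.inl (Sum.inl i) => C l i
    | _, _ => 0

lemma embM_mulVec {p u v : ℕ} (C : Matrix (Fin p) (Fin p) ℝ) (w : VN p u v) :
    (embM u v C) *ᵥ w = embL p u v (C *ᵥ fun i => w (Sum.inl (Sum.inl i))) := by
  funext a
  rcases a with (a | a) | a <;>
    simp [embM, embL, Matrix.mulVec, dotProduct, Fintype.sum_sum_type]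

lemma rank_embM {p : ℕ} (u v : ℕ) (C : Matrix (Fin p) (Fin p) ℝ) :
    (embM u v C).rank = C.rank := by
  have hrange : LinearMap.range (embM u v C).mulVecLin
      = Submodule.map (embL p u v) (LinearMap.range C.mulVecLin) := by
    ext w
    constructor
    · rintro ⟨z, rfl⟩
      exact ⟨C *ᵥ fun i => z (Sum.inl (Sum.inl i)), ⟨_, rfl⟩, (embM_mulVec C z).symm⟩
    · rintro ⟨_, ⟨w', rfl⟩, rfl⟩
      refine ⟨Sum.elim (Sum.elim w' 0) 0, ?_⟩
      rw [Matrix.mulVecLin_apply, Matrix.mulVecLin_apply, embM_mulVec]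
      rfl
  rw [Matrix.rank, Matrix.rank, hrange]
  exact (Submodule.equivMapOfInjective _ (embL_injective p u v) _).symm.finrank_eq

lemma hoJN_eq_embM {p u v : ℕ} (ψ : (Fin p → ℝ) → Fin p → Fin p → ℝ) (x : Fin p → ℝ)
    {n : ℕ} (e : Fin n → VN p u v) (ε : Fin n → ℝ) :
    hoJN u v ψ x e ε
      = embM u v (∑ m, ε m • Bm ψ x (fun i => e m (Sum.inl (Sum.inl i)))) := by
  ext a b
  rw [hoJN, Matrix.sum_apply]
  rcases a with (a | a) | a <;> rcases b with (b | b) | b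
  pick_goal 4
  · show _ = embM u v _ (Sum.inl (Sum.inr a)) (Sum.inl (Sum.inl b))
    rw [show embM u v (∑ m, ε m • Bm ψ x (fun i => e m (Sum.inl (Sum.inl i))))
        (Sum.inl (Sum.inr a)) (Sum.inl (Sum.inl b))
        = (∑ m, ε m • Bm ψ x (fun i => e m (Sum.inl (Sum.inl i)))) a b from rfl,
      Matrix.sum_apply]
    refine Finset.sum_congr rfl fun m _ => ?_
    rw [Matrix.smul_apply, Matrix.smul_apply, smul_eq_mul, smul_eq_mul]
    congr 1
  all_goals simp [jacobiMatN, jacobiMat, embM]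

end Aux2

section Aux3

open Module Submodule Matrix

variable {V : Type*} [AddCommGroup V] [Module ℝ V] [FiniteDimensional ℝ V]

lemma g_zero_left {g : V → V → ℝ}
    (hsmul : ∀ (t : ℝ) a w, g (t • a) w = t * g a w) (w : V) : g 0 w = 0 := by
  have := hsmul 0 0 w
  simpa using this

lemma g_sum_left {g : V → V → ℝ}
    (hadd : ∀ a b w, g (a + b) w = g a w + g b w)
    (hsmul : ∀ (t : ℝ) a w, g (t • a) w = t * g a w)
    {n : ℕ} (f : Fin n → V) (w : V) : g (∑ i, f i) w = ∑ i, g (f i) w := by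
  classical
  exact map_sum (AddMonoidHom.mk' (fun z => g z w) (fun a b => hadd a b w)) f Finset.univ

lemma g_sum_e {g : V → V → ℝ}
    (hadd : ∀ a b w, g (a + b) w = g a w + g b w)
    (hsmul : ∀ (t : ℝ) a w, g (t • a) w = t * g a w)
    {n : ℕ} {e : Fin n → V} {σ : ℝ}
    (he : ∀ i j, g (e i) (e j) = if i = j then σ else 0)
    (c : Fin n → ℝ) (j : Fin n) : g (∑ i, c i • e i) (e j) = σ * c j := by
  rw [g_sum_left hadd hsmul]
  rw [Finset.sum_eq_single j]
  · rw [hsmul, he]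
    simp [mul_comm]
  · intro i _ hij
    rw [hsmul, he]
    simp [hij]
  · intro h
    exact absurd (Finset.mem_univ j) h

lemma ortho_linearIndependent {g : V → V → ℝ}
    (hadd : ∀ a b w, g (a + b) w = g a w + g b w)
    (hsmul : ∀ (t : ℝ) a w, g (t • a) w = t * g a w)
    {n : ℕ} {e : Fin n → V} {σ : ℝ} (hσ : σ ≠ 0)
    (he : ∀ i j, g (e i) (e j) = if i = j then σ else 0) :
    LinearIndependent ℝ e := by
  rw [Fintype.linearIndependent_iff]
  intro c hc j
  have h1 := g_sum_e hadd hsmul he c j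
  rw [hc, g_zero_left hsmul] at h1
  have := mul_eq_zero.mp h1.symm
  tauto

lemma span_rep {g : V → V → ℝ}
    (hadd : ∀ a b w, g (a + b) w = g a w + g b w)
    (hsmul : ∀ (t : ℝ) a w, g (t • a) w = t * g a w)
    (hsymm : ∀ a b, g a b = g b a)
    {n : ℕ} {e : Fin n → V} {σ : ℝ}
    (he : ∀ i j, g (e i) (e j) = if i = j then σ else 0)
    {z : V} (hz : z ∈ Submodule.span ℝ (Set.range e)) :
    ∃ c : Fin n → ℝ, z = ∑ i, c i • e i ∧ g z z = σ * ∑ i, c i ^ 2 := by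
  obtain ⟨c, hc⟩ := (mem_span_range_iff_exists_fun ℝ).mp hz
  refine ⟨c, hc.symm, ?_⟩
  have h1 : g z z = ∑ i, c i * g (e i) z := by
    rw [← hc, g_sum_left hadd hsmul]
    exact Finset.sum_congr rfl fun i _ => hsmul _ _ _
  rw [h1, Finset.mul_sum]
  refine Finset.sum_congr rfl fun i _ => ?_
  rw [hsymm (e i) z, ← hc, g_sum_e hadd hsmul he]
  ring

lemma sum_sq_pos_of_ne {n : ℕ} {c : Fin n → ℝ} {j : Fin n} (hj : c j ≠ 0) :
    0 < ∑ i, c i ^ 2 := by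
  refine Finset.sum_pos' (fun i _ => sq_nonneg _) ⟨j, Finset.mem_univ j, ?_⟩
  exact lt_of_le_of_ne (sq_nonneg _) (Ne.symm (pow_ne_zero 2 hj))

lemma sig_core {g : V → V → ℝ}
    (hadd : ∀ a b w, g (a + b) w = g a w + g b w)
    (hsmul : ∀ (t : ℝ) a w, g (t • a) w = t * g a w)
    (hsymm : ∀ a b, g a b = g b a)
    {n : ℕ} {e : Fin n → V} {σ : ℝ} (hσ : σ = 1 ∨ σ = -1)
    (he : ∀ i j, g (e i) (e j) = if i = j then σ else 0) :
    (∀ z ∈ Submodule.span ℝ (Set.range e), z ≠ 0 → 0 < σ * g z z) ∧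
      Module.finrank ℝ (Submodule.span ℝ (Set.range e)) = n := by
  have hσ0 : σ ≠ 0 := by rcases hσ with h | h <;> rw [h] <;> norm_num
  have hli := ortho_linearIndependent hadd hsmul hσ0 he
  constructor
  · intro z hz hz0
    obtain ⟨c, hcz, hval⟩ := span_rep hadd hsmul hsymm he hz
    have hcne : ∃ j, c j ≠ 0 := by
      by_contra hall
      push_neg at hall
      apply hz0
      rw [hcz]
      simp [hall]
    obtain ⟨j, hj⟩ := hcne
    have hpos := sum_sq_pos_of_ne hj
    rw [hval]
    have : σ * (σ * ∑ i, c i ^ 2) = (σ * σ) * ∑ i, c i ^ 2 := by ring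
    rw [this]
    have hσσ : σ * σ = 1 := by rcases hσ with h | h <;> rw [h] <;> norm_num
    rw [hσσ, one_mul]
    exact hpos
  · rw [finrank_span_eq_card hli, Fintype.card_fin]

lemma sig_neg {g : V → V → ℝ}
    (hadd : ∀ a b w, g (a + b) w = g a w + g b w)
    (hsmul : ∀ (t : ℝ) a w, g (t • a) w = t * g a w)
    (hsymm : ∀ a b, g a b = g b a)
    {n : ℕ} {e : Fin n → V}
    (he : ∀ i j, g (e i) (e j) = if i = j then (-1 : ℝ) else 0) :
    HasSignature g (Submodule.span ℝ (Set.range e)) n 0 ∧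
      IsOrthoBasis g (Submodule.span ℝ (Set.range e)) e (fun _ => -1) := by
  obtain ⟨hdef, hfin⟩ := sig_core hadd hsmul hsymm (Or.inr rfl) he
  have hneg : ∀ z ∈ Submodule.span ℝ (Set.range e), z ≠ 0 → g z z < 0 := by
    intro z hz hz0
    have := hdef z hz hz0
    nlinarith
  refine ⟨⟨?_, ⟨Submodule.span ℝ (Set.range e), le_rfl, hfin, hneg⟩, ?_, ⟨⊥, bot_le, finrank_bot ℝ V, ?_⟩, ?_⟩,
    rfl, fun _ => Or.inr rfl, he⟩
  · intro z hz hzw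
    by_contra hz0
    exact absurd (hzw z hz) (ne_of_lt (hneg z hz hz0))
  · intro W hW _
    calc Module.finrank ℝ W ≤ Module.finrank ℝ (Submodule.span ℝ (Set.range e)) :=
          Submodule.finrank_mono hW
      _ = n := hfin
  · intro z hz hz0
    exact absurd (Submodule.mem_bot ℝ |>.mp hz) hz0
  · intro W hW hpos
    have hbot : W = ⊥ := by
      rw [Submodule.eq_bot_iff]
      intro z hzW
      by_contra hz0
      have h1 := hpos z hzW hz0
      have h2 := hneg z (hW hzW) hz0
      linarith
    rw [hbot]
    simp

lemma sig_pos {g : V → V → ℝ}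
    (hadd : ∀ a b w, g (a + b) w = g a w + g b w)
    (hsmul : ∀ (t : ℝ) a w, g (t • a) w = t * g a w)
    (hsymm : ∀ a b, g a b = g b a)
    {n : ℕ} {e : Fin n → V}
    (he : ∀ i j, g (e i) (e j) = if i = j then (1 : ℝ) else 0) :
    HasSignature g (Submodule.span ℝ (Set.range e)) 0 n ∧
      IsOrthoBasis g (Submodule.span ℝ (Set.range e)) e (fun _ => 1) := by
  obtain ⟨hdef, hfin⟩ := sig_core hadd hsmul hsymm (Or.inl rfl) he
  have hposd : ∀ z ∈ Submodule.span ℝ (Set.range e), z ≠ 0 → 0 < g z z := by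
    intro z hz hz0
    have := hdef z hz hz0
    nlinarith
  refine ⟨⟨?_, ⟨⊥, bot_le, finrank_bot ℝ V, ?_⟩, ?_, ⟨Submodule.span ℝ (Set.range e), le_rfl, hfin, hposd⟩, ?_⟩,
    rfl, fun _ => Or.inl rfl, he⟩
  · intro z hz hzw
    by_contra hz0
    exact absurd (hzw z hz) (ne_of_gt (hposd z hz hz0))
  · intro z hz hz0
    exact absurd (Submodule.mem_bot ℝ |>.mp hz) hz0
  · intro W hW hneg
    have hbot : W = ⊥ := by
      rw [Submodule.eq_bot_iff]
      intro z hzW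
      by_contra hz0
      have h1 := hneg z hzW hz0
      have h2 := hposd z (hW hzW) hz0
      linarith
    rw [hbot]
    simp
  · intro W hW hpos
    calc Module.finrank ℝ W ≤ Module.finrank ℝ (Submodule.span ℝ (Set.range e)) :=
          Submodule.finrank_mono hW
      _ = n := hfin

end Aux3

section Aux4

open Module Submodule Matrix

variable {p u v : ℕ} (ψ : (Fin p → ℝ) → Fin p → Fin p → ℝ) (x : Fin p → ℝ)

lemma gN_add (a b w : VN p u v) :
    gN u v ψ x (a + b) w = gN u v ψ x a w + gN u v ψ x b w := by
  simp only [gN, gpsi, Pi.add_apply, add_mul, mul_add, Finset.sum_add_distrib]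
  ring

lemma gN_smul (t : ℝ) (a w : VN p u v) :
    gN u v ψ x (t • a) w = t * gN u v ψ x a w := by
  simp only [gN, gpsi, Pi.smul_apply, smul_eq_mul, mul_add, Finset.mul_sum]
  congr 1
  · congr 1
    · congr 1
      · exact Finset.sum_congr rfl fun i _ => by ring
      · exact Finset.sum_congr rfl fun i _ => by ring
    · exact Finset.sum_congr rfl fun i _ => Finset.sum_congr rfl fun j _ => by ring
  · exact Finset.sum_congr rfl fun i _ => by ring

lemma gN_symm (hψ : IsSmoothSym ψ) (a w : VN p u v) :
    gN u v ψ x a w = gN u v ψ x w a := by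
  simp only [gN, gpsi]
  have h3 : (∑ i, ∑ j, ψ x i j * a (Sum.inl (Sum.inl i)) * w (Sum.inl (Sum.inl j)))
      = ∑ i, ∑ j, ψ x i j * w (Sum.inl (Sum.inl i)) * a (Sum.inl (Sum.inl j)) := by
    rw [Finset.sum_comm]
    refine Finset.sum_congr rfl fun i _ => Finset.sum_congr rfl fun j _ => ?_
    rw [hψ.2 x j i]
    ring
  have e1 : (∑ i, a (Sum.inl (Sum.inl i)) * w (Sum.inl (Sum.inr i)))
      = ∑ i, w (Sum.inl (Sum.inr i)) * a (Sum.inl (Sum.inl i)) :=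
    Finset.sum_congr rfl fun i _ => mul_comm _ _
  have e2 : (∑ i, a (Sum.inl (Sum.inr i)) * w (Sum.inl (Sum.inl i)))
      = ∑ i, w (Sum.inl (Sum.inl i)) * a (Sum.inl (Sum.inr i)) :=
    Finset.sum_congr rfl fun i _ => mul_comm _ _
  have e4 : (∑ i : Fin (u + v), (if (i : ℕ) < u then (-1:ℝ) else 1) * a (Sum.inr i) * w (Sum.inr i))
      = ∑ i : Fin (u + v), (if (i : ℕ) < u then (-1:ℝ) else 1) * w (Sum.inr i) * a (Sum.inr i) :=
    Finset.sum_congr rfl fun i _ => by ring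
  rw [h3, e1, e2, e4]
  ring

/-- Vector with `x`-part `X`, `y`-part `w`, flat part `0`. -/
def zv (u v : ℕ) {p : ℕ} (X w : Fin p → ℝ) : VN p u v := Sum.elim (Sum.elim X w) 0

/-- Flat unit vector in direction `c`. -/
def fv (u v : ℕ) (p : ℕ) (c : Fin (u + v)) : VN p u v := Sum.elim 0 (Pi.single c 1)

lemma gN_zv_zv (X w X' w' : Fin p → ℝ) :
    gN u v ψ x (zv u v X w) (zv u v X' w')
      = (∑ i, X i * w' i) + (∑ i, w i * X' i) + ∑ i, ∑ j, ψ x i j * X i * X' j := by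
  simp [gN, gpsi, zv]

lemma gN_zv_fv (X w : Fin p → ℝ) (c : Fin (u + v)) :
    gN u v ψ x (zv u v X w) (fv u v p c) = 0 := by
  simp [gN, gpsi, zv, fv]

lemma gN_fv_zv (X w : Fin p → ℝ) (c : Fin (u + v)) :
    gN u v ψ x (fv u v p c) (zv u v X w) = 0 := by
  simp [gN, gpsi, zv, fv]

lemma gN_fv_fv (c c' : Fin (u + v)) :
    gN u v ψ x (fv u v p c) (fv u v p c')
      = if c = c' then (if (c : ℕ) < u then (-1 : ℝ) else 1) else 0 := by
  simp only [gN, gpsi, fv, Sum.elim_inl, Sum.elim_inr, Pi.zero_apply, Pi.single_apply]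
  rw [show (∑ i : Fin (u + v), ((if (i : ℕ) < u then (-1:ℝ) else 1) * (if i = c then 1 else 0))
      * (if i = c' then 1 else 0))
    = ∑ i : Fin (u + v), (if i = c then (if (i : ℕ) < u then (-1:ℝ) else 1)
      * (if i = c' then 1 else 0) else 0) from
    Finset.sum_congr rfl fun i _ => by by_cases h : i = c <;> simp [h]]
  rw [Finset.sum_ite_eq']
  by_cases h : c = c'
  · subst h
    simp
  · simp [h, Ne.symm h]

/-- sums against `Pi.single` -/
lemma sum_single_mul (c : Fin p) (s : ℝ) (g : Fin p → ℝ) :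
    ∑ i, (Pi.single c s : Fin p → ℝ) i * g i = s * g c := by
  rw [show (∑ i, (Pi.single c s : Fin p → ℝ) i * g i)
      = ∑ i, (if i = c then s * g i else 0) from
    Finset.sum_congr rfl fun i _ => by
      by_cases h : i = c <;> simp [h, Pi.single_apply]]
  rw [Finset.sum_ite_eq']
  simp

lemma sum_mul_single (c : Fin p) (s : ℝ) (g : Fin p → ℝ) :
    ∑ i, g i * (Pi.single c s : Fin p → ℝ) i = g c * s := by
  rw [show (∑ i, g i * (Pi.single c s : Fin p → ℝ) i) = ∑ i, (Pi.single c s : Fin p → ℝ) i * g i from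
    Finset.sum_congr rfl fun i _ => mul_comm _ _, sum_single_mul]
  ring

lemma sum_sum_psi (c d : Fin p) (s t : ℝ) :
    ∑ i, ∑ j, ψ x i j * (Pi.single c s : Fin p → ℝ) i * (Pi.single d t : Fin p → ℝ) j = ψ x c d * s * t := by
  have h1 : ∀ i : Fin p, (∑ j, ψ x i j * (Pi.single c s : Fin p → ℝ) i * (Pi.single d t : Fin p → ℝ) j)
      = (Pi.single c s : Fin p → ℝ) i * (ψ x i d * t) := by
    intro i
    rw [show (∑ j, ψ x i j * (Pi.single c s : Fin p → ℝ) i * (Pi.single d t : Fin p → ℝ) j)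
        = ∑ j, (ψ x i j * (Pi.single c s : Fin p → ℝ) i) * (Pi.single d t : Fin p → ℝ) j from
      Finset.sum_congr rfl fun j _ => by ring, sum_mul_single]
    ring
  rw [Finset.sum_congr rfl fun i _ => h1 i, sum_single_mul]
  ring

end Aux4

section Aux5

open Module Submodule Matrix

variable {p u v : ℕ} (ψ : (Fin p → ℝ) → Fin p → Fin p → ℝ) (x : Fin p → ℝ)

lemma flat_ortho {k : ℕ} (ι : Fin k → Fin (u + v)) (hinj : Function.Injective ι) (σ : ℝ)
    (hsgn : ∀ m, (if ((ι m : ℕ) < u) then (-1 : ℝ) else 1) = σ) :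
    ∀ i j, gN u v ψ x (fv u v p (ι i)) (fv u v p (ι j)) = if i = j then σ else 0 := by
  intro i j
  rw [gN_fv_fv]
  by_cases h : i = j
  · subst h
    simp [hsgn i]
  · have h2 : ι i ≠ ι j := fun hh => h (hinj hh)
    simp [h, h2]

lemma cons_ortho {k : ℕ} (Z : VN p u v) (f : Fin k → VN p u v) (σ : ℝ)
    (hZZ : gN u v ψ x Z Z = σ)
    (hZf : ∀ m, gN u v ψ x Z (f m) = 0)
    (hfZ : ∀ m, gN u v ψ x (f m) Z = 0)
    (hff : ∀ i j, gN u v ψ x (f i) (f j) = if i = j then σ else 0) :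
    ∀ i j, gN u v ψ x ((Fin.cons Z f : Fin (k+1) → VN p u v) i)
      ((Fin.cons Z f : Fin (k+1) → VN p u v) j) = if i = j then σ else 0 := by
  intro i j
  induction i using Fin.cases with
  | zero =>
    induction j using Fin.cases with
    | zero => simpa using hZZ
    | succ j => simp [Fin.cons_succ, hZf, (Fin.succ_ne_zero j).symm]
  | succ i =>
    induction j using Fin.cases with
    | zero => simp [Fin.cons_succ, hfZ, Fin.succ_ne_zero i]
    | succ j =>
      rw [Fin.cons_succ, Fin.cons_succ, hff]
      by_cases h : i = j
      · simp [h]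
      · have h2 : i.succ ≠ j.succ := fun hh => h (Fin.succ_inj.mp hh)
        simp [h, h2]

lemma gN_zv_single (c d : Fin p) (w w' : Fin p → ℝ) :
    gN u v ψ x (zv u v (Pi.single c 1) w) (zv u v (Pi.single d 1) w')
      = w' c + w d + ψ x c d := by
  rw [gN_zv_zv, sum_single_mul, sum_mul_single, sum_sum_psi]
  ring

lemma hoJN_rank {n : ℕ} (e : Fin n → VN p u v) (ε : Fin n → ℝ) :
    (hoJN u v ψ x e ε).rank
      = (∑ m, ε m • Bm ψ x (fun i => e m (Sum.inl (Sum.inl i)))).rank := by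
  rw [hoJN_eq_embM, rank_embM]

end Aux5

section Aux6

open Module Submodule Matrix

variable {p u v : ℕ} (ψ : (Fin p → ℝ) → Fin p → Fin p → ℝ) (x : Fin p → ℝ)

/-- The timelike/spacelike unit vector with `x`-part `Pi.single c 1`. -/
noncomputable def Zu (u v : ℕ) {p : ℕ} (ψ : (Fin p → ℝ) → Fin p → Fin p → ℝ)
    (x : Fin p → ℝ) (σ : ℝ) (c : Fin p) (w : Fin p → ℝ) : VN p u v :=
  zv u v (Pi.single c 1) w

/-- First normalized vector: `w = ((σ - ψ_{cc})/2) • δ_c`. -/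
noncomputable def w1 (ψ : (Fin p → ℝ) → Fin p → Fin p → ℝ) (x : Fin p → ℝ)
    (σ : ℝ) (c : Fin p) : Fin p → ℝ :=
  ((σ - ψ x c c) / 2) • (Pi.single c 1 : Fin p → ℝ)

/-- Second normalized vector: `w = (-ψ_{cd}) • δ_c + ((σ - ψ_{dd})/2) • δ_d`. -/
noncomputable def w2 (ψ : (Fin p → ℝ) → Fin p → Fin p → ℝ) (x : Fin p → ℝ)
    (σ : ℝ) (c d : Fin p) : Fin p → ℝ :=
  (-(ψ x c d)) • (Pi.single c 1 : Fin p → ℝ) + ((σ - ψ x d d) / 2) • (Pi.single d 1 : Fin p → ℝ)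

lemma gN_Z1_Z1 (σ : ℝ) (c : Fin p) :
    gN u v ψ x (Zu u v ψ x σ c (w1 ψ x σ c)) (Zu u v ψ x σ c (w1 ψ x σ c)) = σ := by
  rw [Zu, gN_zv_single, w1]
  simp only [Pi.smul_apply, Pi.single_eq_same, smul_eq_mul]
  ring

lemma gN_Z1_Z2 (σ : ℝ) {c d : Fin p} (hcd : c ≠ d) :
    gN u v ψ x (Zu u v ψ x σ c (w1 ψ x σ c)) (Zu u v ψ x σ d (w2 ψ x σ c d)) = 0 := by
  rw [Zu, Zu, gN_zv_single, w1, w2]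
  simp only [Pi.add_apply, Pi.smul_apply, Pi.single_eq_same, smul_eq_mul,
    Pi.single_eq_of_ne hcd, Pi.single_eq_of_ne (Ne.symm hcd)]
  ring

lemma gN_Z2_Z1 (hψs : IsSmoothSym ψ) (σ : ℝ) {c d : Fin p} (hcd : c ≠ d) :
    gN u v ψ x (Zu u v ψ x σ d (w2 ψ x σ c d)) (Zu u v ψ x σ c (w1 ψ x σ c)) = 0 := by
  rw [Zu, Zu, gN_zv_single, w1, w2]
  simp only [Pi.add_apply, Pi.smul_apply, Pi.single_eq_same, smul_eq_mul,
    Pi.single_eq_of_ne hcd, Pi.single_eq_of_ne (Ne.symm hcd)]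
  rw [hψs.2 x d c]
  ring

lemma gN_Z2_Z2 (σ : ℝ) {c d : Fin p} (hcd : c ≠ d) :
    gN u v ψ x (Zu u v ψ x σ d (w2 ψ x σ c d)) (Zu u v ψ x σ d (w2 ψ x σ c d)) = σ := by
  rw [Zu, gN_zv_single, w2]
  simp only [Pi.add_apply, Pi.smul_apply, Pi.single_eq_same, smul_eq_mul,
    Pi.single_eq_of_ne hcd, Pi.single_eq_of_ne (Ne.symm hcd)]
  ring

/-- Orthonormality of configuration B : one `Z`-vector plus flat vectors. -/
lemma heB (σ : ℝ) (c : Fin p) {k : ℕ} (ι : Fin k → Fin (u + v))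
    (hinj : Function.Injective ι)
    (hsgn : ∀ m, (if ((ι m : ℕ) < u) then (-1 : ℝ) else 1) = σ) :
    ∀ i j, gN u v ψ x
      ((Fin.cons (Zu u v ψ x σ c (w1 ψ x σ c)) (fun m => fv u v p (ι m)) :
        Fin (k+1) → VN p u v) i)
      ((Fin.cons (Zu u v ψ x σ c (w1 ψ x σ c)) (fun m => fv u v p (ι m)) :
        Fin (k+1) → VN p u v) j) = if i = j then σ else 0 := by
  refine cons_ortho ψ x _ _ σ (gN_Z1_Z1 ψ x σ c) ?_ ?_ (flat_ortho ψ x ι hinj σ hsgn)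
  · intro m
    rw [Zu, gN_zv_fv]
  · intro m
    rw [Zu, gN_fv_zv]

/-- Orthonormality of configuration C : two `Z`-vectors plus flat vectors. -/
lemma heC (hψs : IsSmoothSym ψ) (σ : ℝ) {c d : Fin p} (hcd : c ≠ d) {k : ℕ}
    (ι : Fin k → Fin (u + v)) (hinj : Function.Injective ι)
    (hsgn : ∀ m, (if ((ι m : ℕ) < u) then (-1 : ℝ) else 1) = σ) :
    ∀ i j, gN u v ψ x
      ((Fin.cons (Zu u v ψ x σ c (w1 ψ x σ c))
        (Fin.cons (Zu u v ψ x σ d (w2 ψ x σ c d)) (fun m => fv u v p (ι m))) :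
        Fin (k+2) → VN p u v) i)
      ((Fin.cons (Zu u v ψ x σ c (w1 ψ x σ c))
        (Fin.cons (Zu u v ψ x σ d (w2 ψ x σ c d)) (fun m => fv u v p (ι m))) :
        Fin (k+2) → VN p u v) j) = if i = j then σ else 0 := by
  refine cons_ortho ψ x _ _ σ (gN_Z1_Z1 ψ x σ c) ?_ ?_ ?_
  · intro m
    induction m using Fin.cases with
    | zero => simpa using gN_Z1_Z2 ψ x σ hcd
    | succ m => rw [Fin.cons_succ, Zu, gN_zv_fv]
  · intro m
    induction m using Fin.cases with
    | zero => simpa using gN_Z2_Z1 ψ x hψs σ hcd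
    | succ m => rw [Fin.cons_succ, Zu, gN_fv_zv]
  · refine cons_ortho ψ x _ _ σ (gN_Z2_Z2 ψ x σ hcd) ?_ ?_ (flat_ortho ψ x ι hinj σ hsgn)
    · intro m
      rw [Zu, gN_zv_fv]
    · intro m
      rw [Zu, gN_fv_zv]

/-- Rank of the higher order Jacobi operator for a pure flat configuration. -/
lemma rankA (σ : ℝ) {k : ℕ} (ι : Fin k → Fin (u + v)) :
    (hoJN u v ψ x (fun m => fv u v p (ι m)) (fun _ => σ)).rank = 0 := by
  rw [hoJN_rank]
  have h : (∑ m : Fin k, σ • Bm ψ x (fun i => fv u v p (ι m) (Sum.inl (Sum.inl i)))) = 0 := by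
    refine Finset.sum_eq_zero fun m _ => ?_
    rw [show (fun i => fv u v p (ι m) (Sum.inl (Sum.inl i))) = (0 : Fin p → ℝ) from rfl,
      Bm_zero, smul_zero]
  rw [h, Matrix.rank_zero]

lemma rankB (hψm : MemPsi ψ) (σ : ℝ) (hσ : σ ≠ 0) (c : Fin p) {k : ℕ}
    (ι : Fin k → Fin (u + v)) :
    (hoJN u v ψ x (Fin.cons (Zu u v ψ x σ c (w1 ψ x σ c)) (fun m => fv u v p (ι m)))
      (fun _ => σ)).rank = p - 1 ∧ 1 ≤ p := by
  have hc : (Pi.single c 1 : Fin p → ℝ) ≠ 0 := by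
    intro h
    have := congrFun h c
    simp at this
  rw [hoJN_rank, Fin.sum_univ_succ]
  simp only [Fin.cons_zero, Fin.cons_succ]
  rw [show (fun i => Zu u v ψ x σ c (w1 ψ x σ c) (Sum.inl (Sum.inl i)))
      = (Pi.single c 1 : Fin p → ℝ) from rfl]
  have h : (∑ m : Fin k, σ • Bm ψ x (fun i => fv u v p (ι m) (Sum.inl (Sum.inl i)))) = 0 := by
    refine Finset.sum_eq_zero fun m _ => ?_
    rw [show (fun i => fv u v p (ι m) (Sum.inl (Sum.inl i))) = (0 : Fin p → ℝ) from rfl,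
      Bm_zero, smul_zero]
  rw [h, add_zero]
  exact rank_Bm hψm x hc σ hσ

lemma rankC (hψm : MemPsi ψ) (σ : ℝ) (hσ : σ ≠ 0) {c d : Fin p} (hcd : c ≠ d) {k : ℕ}
    (ι : Fin k → Fin (u + v)) :
    (hoJN u v ψ x (Fin.cons (Zu u v ψ x σ c (w1 ψ x σ c))
      (Fin.cons (Zu u v ψ x σ d (w2 ψ x σ c d)) (fun m => fv u v p (ι m))))
      (fun _ => σ)).rank = p := by
  have hc : (Pi.single c 1 : Fin p → ℝ) ≠ 0 := by
    intro h; have := congrFun h c; simp at this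
  have hd : (Pi.single d 1 : Fin p → ℝ) ≠ 0 := by
    intro h; have := congrFun h d; simp at this
  rw [hoJN_rank, Fin.sum_univ_succ]
  simp only [Fin.cons_zero, Fin.cons_succ]
  rw [Fin.sum_univ_succ]
  simp only [Fin.cons_zero, Fin.cons_succ]
  rw [show (fun i => Zu u v ψ x σ c (w1 ψ x σ c) (Sum.inl (Sum.inl i)))
      = (Pi.single c 1 : Fin p → ℝ) from rfl,
    show (fun i => Zu u v ψ x σ d (w2 ψ x σ c d) (Sum.inl (Sum.inl i)))
      = (Pi.single d 1 : Fin p → ℝ) from rfl]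
  have h : (∑ m : Fin k, σ • Bm ψ x (fun i => fv u v p (ι m) (Sum.inl (Sum.inl i)))) = 0 := by
    refine Finset.sum_eq_zero fun m _ => ?_
    rw [show (fun i => fv u v p (ι m) (Sum.inl (Sum.inl i))) = (0 : Fin p → ℝ) from rfl,
      Bm_zero, smul_zero]
  rw [h, add_zero, ← smul_add]
  have hind : ∀ (y : Fin p → ℝ) (cc cc' : ℝ),
      y = cc • (Pi.single c 1 : Fin p → ℝ) → y = cc' • (Pi.single d 1 : Fin p → ℝ) → y = 0 := by
    intro y cc cc' h1 h2
    have hyd : y d = 0 := by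
      rw [h1]
      simp [Pi.single_eq_of_ne (Ne.symm hcd)]
    have hyc : y c = 0 := by
      rw [h2]
      simp [Pi.single_eq_of_ne hcd]
    have hcc : cc = 0 := by
      have := congrFun h1 c
      simpa [hyc] using this.symm
    rw [h1, hcc, zero_smul]
  exact rank_Bm_add hψm x hc hd hind σ hσ

end Aux6

/-- Let `ψ ∈ Ψ`. If `u > 0` and `1 ≤ r ≤ u+1`, then there exist (at one
point) timelike `r`-dimensional subspaces `π₁, π₂` of `(N, g_N)` with
`rank J_N(π₁) ≠ rank J_N(π₂)`, so `(N, g_N)` is not Jordan Osserman of type `(r,0)`.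
Similarly, if `v > 0` and `1 ≤ s ≤ v+1`, there exist spacelike `s`-dimensional subspaces
with differing ranks, so `(N, g_N)` is not Jordan Osserman of type `(0,s)`. -/
theorem stmt16 (p u v : ℕ) (hp : 2 ≤ p)
    (ψ : (Fin p → ℝ) → Fin p → Fin p → ℝ) (hψ : MemPsi ψ) :
    (0 < u → ∀ r : ℕ, 1 ≤ r → r ≤ u + 1 →
      ∃ (x y : Fin p → ℝ) (w : Fin (u + v) → ℝ) (π₁ π₂ : Submodule ℝ (VN p u v))
        (e₁ e₂ : Fin r → VN p u v) (ε₁ ε₂ : Fin r → ℝ),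
        HasSignature (gN u v ψ x) π₁ r 0 ∧ IsOrthoBasis (gN u v ψ x) π₁ e₁ ε₁ ∧
        HasSignature (gN u v ψ x) π₂ r 0 ∧ IsOrthoBasis (gN u v ψ x) π₂ e₂ ε₂ ∧
        (hoJN u v ψ x e₁ ε₁).rank ≠ (hoJN u v ψ x e₂ ε₂).rank) ∧
    (0 < v → ∀ s : ℕ, 1 ≤ s → s ≤ v + 1 →
      ∃ (x y : Fin p → ℝ) (w : Fin (u + v) → ℝ) (π₁ π₂ : Submodule ℝ (VN p u v))
        (e₁ e₂ : Fin s → VN p u v) (ε₁ ε₂ : Fin s → ℝ),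
        HasSignature (gN u v ψ x) π₁ 0 s ∧ IsOrthoBasis (gN u v ψ x) π₁ e₁ ε₁ ∧
        HasSignature (gN u v ψ x) π₂ 0 s ∧ IsOrthoBasis (gN u v ψ x) π₂ e₂ ε₂ ∧
        (hoJN u v ψ x e₁ ε₁).rank ≠ (hoJN u v ψ x e₂ ε₂).rank) := by
  have hadd := gN_add (u := u) (v := v) ψ (0 : Fin p → ℝ)
  have hsmul := gN_smul (u := u) (v := v) ψ (0 : Fin p → ℝ)
  have hsymm := gN_symm (u := u) (v := v) ψ (0 : Fin p → ℝ) hψ.1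
  obtain ⟨c0, c1, hcd⟩ : ∃ c0 c1 : Fin p, c0 ≠ c1 :=
    ⟨⟨0, by omega⟩, ⟨1, by omega⟩, by intro h; rw [Fin.mk_eq_mk] at h; omega⟩
  constructor
  · -- timelike case, sign σ = -1
    intro hu r hr1 hr2
    obtain ⟨n, rfl⟩ : ∃ n, r = n + 1 := ⟨r - 1, by omega⟩
    by_cases hru : n + 1 ≤ u
    · -- π₁ : pure flat, rank 0 ; π₂ : one Z vector + flats, rank p-1
      have hιA : ∀ m : Fin (n+1), (m : ℕ) < u + v := fun m => by
        have := m.2; omega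
      set ιA : Fin (n+1) → Fin (u+v) := fun m => ⟨(m : ℕ), hιA m⟩ with hA
      have hinjA : Function.Injective ιA := by
        intro a b h
        apply Fin.ext
        simpa [hA] using congrArg Fin.val h
      have hsgnA : ∀ m, (if ((ιA m : ℕ) < u) then (-1 : ℝ) else 1) = -1 := by
        intro m
        have h1 : ((ιA m : ℕ)) < u := by
          have := m.2; simp only [hA]; omega
        simp [h1]
      have heA' := flat_ortho ψ (0 : Fin p → ℝ) ιA hinjA (-1) hsgnA
      obtain ⟨hsA, hbA⟩ := sig_neg hadd hsmul hsymm heA'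
      have hιB : ∀ m : Fin n, (m : ℕ) < u + v := fun m => by have := m.2; omega
      set ιB : Fin n → Fin (u+v) := fun m => ⟨(m : ℕ), hιB m⟩ with hB
      have hinjB : Function.Injective ιB := by
        intro a b h
        apply Fin.ext
        simpa [hB] using congrArg Fin.val h
      have hsgnB : ∀ m, (if ((ιB m : ℕ) < u) then (-1 : ℝ) else 1) = -1 := by
        intro m
        have h1 : ((ιB m : ℕ)) < u := by
          have := m.2; simp only [hB]; omega
        simp [h1]
      have heB' := heB ψ (0 : Fin p → ℝ) (-1) c0 ιB hinjB hsgnB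
      obtain ⟨hsB, hbB⟩ := sig_neg hadd hsmul hsymm heB'
      have hr1 := rankA ψ (0 : Fin p → ℝ) (-1) ιA
      have hr2 := (rankB ψ (0 : Fin p → ℝ) hψ (-1) (by norm_num) c0 ιB).1
      exact ⟨0, 0, 0, _, _, _, _, _, _, hsA, hbA, hsB, hbB, by
        rw [hr1, hr2]; omega⟩
    · -- r = u + 1 : π₁ : one Z + u flats, rank p-1 ; π₂ : two Z's + (u-1) flats, rank p
      have hn : n = u := by omega
      obtain ⟨t, rfl⟩ : ∃ t, n = t + 1 := ⟨n - 1, by omega⟩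
      have hιB : ∀ m : Fin (t+1), (m : ℕ) < u + v := fun m => by have := m.2; omega
      set ιB : Fin (t+1) → Fin (u+v) := fun m => ⟨(m : ℕ), hιB m⟩ with hB
      have hinjB : Function.Injective ιB := by
        intro a b h
        apply Fin.ext
        simpa [hB] using congrArg Fin.val h
      have hsgnB : ∀ m, (if ((ιB m : ℕ) < u) then (-1 : ℝ) else 1) = -1 := by
        intro m
        have h1 : ((ιB m : ℕ)) < u := by
          have := m.2; simp only [hB]; omega
        simp [h1]
      have heB' := heB ψ (0 : Fin p → ℝ) (-1) c0 ιB hinjB hsgnB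
      obtain ⟨hsB, hbB⟩ := sig_neg hadd hsmul hsymm heB'
      have hιC : ∀ m : Fin t, (m : ℕ) < u + v := fun m => by have := m.2; omega
      set ιC : Fin t → Fin (u+v) := fun m => ⟨(m : ℕ), hιC m⟩ with hC
      have hinjC : Function.Injective ιC := by
        intro a b h
        apply Fin.ext
        simpa [hC] using congrArg Fin.val h
      have hsgnC : ∀ m, (if ((ιC m : ℕ) < u) then (-1 : ℝ) else 1) = -1 := by
        intro m
        have h1 : ((ιC m : ℕ)) < u := by
          have := m.2; simp only [hC]; omega
        simp [h1]
      have heC' := heC ψ (0 : Fin p → ℝ) hψ.1 (-1) hcd ιC hinjC hsgnC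
      obtain ⟨hsC, hbC⟩ := sig_neg hadd hsmul hsymm heC'
      have hk1 := (rankB ψ (0 : Fin p → ℝ) hψ (-1) (by norm_num) c0 ιB).1
      have hk2 := rankC ψ (0 : Fin p → ℝ) hψ (-1) (by norm_num) hcd ιC
      exact ⟨0, 0, 0, _, _, _, _, _, _, hsB, hbB, hsC, hbC, by
        rw [hk1, hk2]; omega⟩
  · -- spacelike case, sign σ = 1
    intro hv s hs1 hs2
    obtain ⟨n, rfl⟩ : ∃ n, s = n + 1 := ⟨s - 1, by omega⟩
    by_cases hsv : n + 1 ≤ v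
    · have hιA : ∀ m : Fin (n+1), u + (m : ℕ) < u + v := fun m => by have := m.2; omega
      set ιA : Fin (n+1) → Fin (u+v) := fun m => ⟨u + (m : ℕ), hιA m⟩ with hA
      have hinjA : Function.Injective ιA := by
        intro a b h
        apply Fin.ext
        have := congrArg Fin.val h
        simp only [hA] at this
        omega
      have hsgnA : ∀ m, (if ((ιA m : ℕ) < u) then (-1 : ℝ) else 1) = 1 := by
        intro m
        have h1 : ¬ ((ιA m : ℕ)) < u := by simp only [hA]; omega
        simp [h1]
      have heA' := flat_ortho ψ (0 : Fin p → ℝ) ιA hinjA 1 hsgnA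
      obtain ⟨hsA, hbA⟩ := sig_pos hadd hsmul hsymm heA'
      have hιB : ∀ m : Fin n, u + (m : ℕ) < u + v := fun m => by have := m.2; omega
      set ιB : Fin n → Fin (u+v) := fun m => ⟨u + (m : ℕ), hιB m⟩ with hB
      have hinjB : Function.Injective ιB := by
        intro a b h
        apply Fin.ext
        have := congrArg Fin.val h
        simp only [hB] at this
        omega
      have hsgnB : ∀ m, (if ((ιB m : ℕ) < u) then (-1 : ℝ) else 1) = 1 := by
        intro m
        have h1 : ¬ ((ιB m : ℕ)) < u := by simp only [hB]; omega
        simp [h1]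
      have heB' := heB ψ (0 : Fin p → ℝ) 1 c0 ιB hinjB hsgnB
      obtain ⟨hsB, hbB⟩ := sig_pos hadd hsmul hsymm heB'
      have hr1 := rankA ψ (0 : Fin p → ℝ) 1 ιA
      have hr2 := (rankB ψ (0 : Fin p → ℝ) hψ 1 (by norm_num) c0 ιB).1
      exact ⟨0, 0, 0, _, _, _, _, _, _, hsA, hbA, hsB, hbB, by
        rw [hr1, hr2]; omega⟩
    · have hn : n = v := by omega
      obtain ⟨t, rfl⟩ : ∃ t, n = t + 1 := ⟨n - 1, by omega⟩
      have hιB : ∀ m : Fin (t+1), u + (m : ℕ) < u + v := fun m => by have := m.2; omega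
      set ιB : Fin (t+1) → Fin (u+v) := fun m => ⟨u + (m : ℕ), hιB m⟩ with hB
      have hinjB : Function.Injective ιB := by
        intro a b h
        apply Fin.ext
        have := congrArg Fin.val h
        simp only [hB] at this
        omega
      have hsgnB : ∀ m, (if ((ιB m : ℕ) < u) then (-1 : ℝ) else 1) = 1 := by
        intro m
        have h1 : ¬ ((ιB m : ℕ)) < u := by simp only [hB]; omega
        simp [h1]
      have heB' := heB ψ (0 : Fin p → ℝ) 1 c0 ιB hinjB hsgnB
      obtain ⟨hsB, hbB⟩ := sig_pos hadd hsmul hsymm heB'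
      have hιC : ∀ m : Fin t, u + (m : ℕ) < u + v := fun m => by have := m.2; omega
      set ιC : Fin t → Fin (u+v) := fun m => ⟨u + (m : ℕ), hιC m⟩ with hC
      have hinjC : Function.Injective ιC := by
        intro a b h
        apply Fin.ext
        have := congrArg Fin.val h
        simp only [hC] at this
        omega
      have hsgnC : ∀ m, (if ((ιC m : ℕ) < u) then (-1 : ℝ) else 1) = 1 := by
        intro m
        have h1 : ¬ ((ιC m : ℕ)) < u := by simp only [hC]; omega
        simp [h1]
      have heC' := heC ψ (0 : Fin p → ℝ) hψ.1 1 hcd ιC hinjC hsgnC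
      obtain ⟨hsC, hbC⟩ := sig_pos hadd hsmul hsymm heC'
      have hk1 := (rankB ψ (0 : Fin p → ℝ) hψ 1 (by norm_num) c0 ιB).1
      have hk2 := rankC ψ (0 : Fin p → ℝ) hψ 1 (by norm_num) hcd ιC
      exact ⟨0, 0, 0, _, _, _, _, _, _, hsB, hbB, hsC, hbC, by
        rw [hk1, hk2]; omega⟩
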